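/- arXiv:2101.01612 — 6 statements merged into one kernel-verified Lean document; each statement's English description precedes it below -/
import Mathlib

section
/- Fix c, k₀, B̃, g_tr, v with 0 < g_tr < v and c, B̃ > 0, and set λ = 0. Then lim_{k→∞} k^{3/2} · E_rel(g_tr, v) = 4 π^{5/2} B̃ c, where E_rel(g_tr, v) := 16π² B̃ c ∫_{g_tr}^{∞} exp(−k(v−g)²) · [(1 − exp(−4kvg))/(4kvg)] · g² dg depends on k. Equivalently, E_rel(g_tr, v) is asymptotic to 4π B̃ c (π/k)^{3/2} as k → ∞ when g_tr < v. -/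
/-!
For `g > 0` the integrand of `E_rel` equals `g (e^{-k(g-v)²} - e^{-k(g+v)²}) / (4kv)`, so after
the shifts `g = s ± v` everything is explicit except the Gaussian tails
`∫_{g_tr ∓ v}^∞ e^{-ks²} ds`. The scaling `s = t/√k` turns `√k` times such a tail into
`∫_{√k (g_tr ∓ v)}^∞ e^{-t²} dt`, which tends to `√π` because `g_tr < v`, resp. to `0`; the
boundary terms contribute `O(k^{-1/2})` to `k^{3/2} E_rel`.
-/

open MeasureTheory Real Filter

noncomputable section

/-- The error bound `E_rel(g_tr, v)` for Maxwell-type collisions (`λ = 0`), as a function of the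
width parameter `k`:
`E_rel(g_tr,v) = 16π² B̃ c ∫_{g_tr}^∞ e^{−k(v−g)²} [(1−e^{−4kvg})/(4kvg)] g² dg`. -/
def Erel (Btil c k gtr v : ℝ) : ℝ :=
  16 * π ^ 2 * Btil * c *
    ∫ g in Set.Ioi gtr,
      Real.exp (-k * (v - g) ^ 2) * ((1 - Real.exp (-(4 * k * v * g))) / (4 * k * v * g)) * g ^ 2

open Set Topology

section SetIntegralIoi

variable {E : Type*} [NormedAddCommGroup E] [NormedSpace ℝ E] {μ : Measure ℝ} {f : ℝ → E}

theorem setIntegral_Ioi_comp_add_right (a w : ℝ) :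
    ∫ x in Ioi a, f (x + w) = ∫ x in Ioi (a + w), f x := by
  rw [← integral_indicator measurableSet_Ioi, ← integral_indicator measurableSet_Ioi,
    ← integral_add_right_eq_self ((Ioi (a + w)).indicator f) w]
  congr 1 with x
  simp only [indicator, mem_Ioi, add_lt_add_iff_right]

theorem tendsto_setIntegral_Ioi_atTop (hf : Integrable f μ) :
    Tendsto (fun x => ∫ t in Ioi x, f t ∂μ) atTop (𝓝 0) := by
  have h := tendsto_setIntegral_of_antitone (μ := μ) (f := f) (fun x => measurableSet_Ioi)
    (fun x y hxy => Ioi_subset_Ioi hxy) ⟨0, hf.integrableOn⟩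
  rwa [show (⋂ x : ℝ, Ioi x) = ∅ from iInter_eq_empty_iff.2 fun t => ⟨t, lt_irrefl t⟩,
    setIntegral_empty] at h

theorem tendsto_setIntegral_Ioi_atBot (hf : Integrable f μ) :
    Tendsto (fun x => ∫ t in Ioi x, f t ∂μ) atBot (𝓝 (∫ t, f t ∂μ)) := by
  have h := tendsto_setIntegral_of_monotone (μ := μ) (f := f)
    (s := fun x : ℝᵒᵈ => Ioi (OrderDual.ofDual x)) (fun x => measurableSet_Ioi)
    (fun x y hxy => Ioi_subset_Ioi hxy) hf.integrableOn
  rwa [show (⋃ x : ℝᵒᵈ, Ioi (OrderDual.ofDual x)) = univ from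
    iUnion_eq_univ_iff.2 fun t => ⟨OrderDual.toDual (t - 1), sub_one_lt t⟩, setIntegral_univ] at h

end SetIntegralIoi

section Gaussian

variable {k : ℝ}

theorem integral_Ioi_mul_exp_neg_mul_sq (hk : 0 < k) (b : ℝ) :
    ∫ s in Ioi b, s * exp (-k * s ^ 2) = exp (-k * b ^ 2) / (2 * k) := by
  have hderiv (x : ℝ) :
      HasDerivAt (fun x => -exp (-k * x ^ 2) / (2 * k)) (x * exp (-k * x ^ 2)) x := by
    refine (((hasDerivAt_pow 2 x).const_mul (-k)).exp.neg.div_const (2 * k)).congr_deriv ?_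
    field_simp
    ring
  have hlim : Tendsto (fun x => -exp (-k * x ^ 2) / (2 * k)) atTop (𝓝 0) := by
    have : Tendsto (fun x : ℝ => -k * x ^ 2) atTop atBot := by
      simpa only [neg_mul, Function.comp_def] using tendsto_neg_atTop_atBot.comp
        ((tendsto_pow_atTop two_ne_zero).const_mul_atTop hk)
    simpa using (tendsto_exp_atBot.comp this).neg.div_const (2 * k)
  rw [integral_Ioi_of_hasDerivAt_of_tendsto' (fun x _ => hderiv x)
    (integrable_mul_exp_neg_mul_sq hk).integrableOn hlim]
  ring

theorem integrable_mul_exp_neg_mul_sub_sq (hk : 0 < k) (w : ℝ) :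
    Integrable (fun g => g * exp (-k * (g - w) ^ 2)) := by
  refine (((integrable_mul_exp_neg_mul_sq hk).add
    ((integrable_exp_neg_mul_sq hk).const_mul w)).comp_sub_right w).congr (.of_forall fun g => ?_)
  simp only [Pi.add_apply]
  ring

theorem integral_Ioi_mul_exp_neg_mul_sub_sq (hk : 0 < k) (a w : ℝ) :
    ∫ g in Ioi a, g * exp (-k * (g - w) ^ 2) =
      exp (-k * (a - w) ^ 2) / (2 * k) + w * ∫ s in Ioi (a - w), exp (-k * s ^ 2) := by
  rw [← sub_add_cancel a w, ← setIntegral_Ioi_comp_add_right]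
  simp only [add_sub_cancel_right, add_mul]
  rw [integral_add (integrable_mul_exp_neg_mul_sq hk).integrableOn
      ((integrable_exp_neg_mul_sq hk).const_mul w).integrableOn,
    integral_Ioi_mul_exp_neg_mul_sq hk, integral_const_mul]

theorem sqrt_mul_integral_Ioi_exp_neg_mul_sq (hk : 0 < k) (b : ℝ) :
    √k * ∫ s in Ioi b, exp (-k * s ^ 2) = ∫ t in Ioi (√k * b), exp (-t ^ 2) := by
  rw [← integral_comp_mul_left_Ioi' (fun t => exp (-t ^ 2)) b (sqrt_pos.2 hk), smul_eq_mul]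
  congr 2 with s
  rw [mul_pow, sq_sqrt hk.le, neg_mul]

theorem tendsto_sqrt_mul_integral_Ioi_exp_neg_mul_sq_of_neg {b : ℝ} (hb : b < 0) :
    Tendsto (fun k => √k * ∫ s in Ioi b, exp (-k * s ^ 2)) atTop (𝓝 √π) := by
  have h := (tendsto_setIntegral_Ioi_atBot (integrable_exp_neg_mul_sq one_pos)).comp
    (tendsto_sqrt_atTop.atTop_mul_const_of_neg hb)
  have hπ : ∫ t, exp (-t ^ 2) = √π := by simpa using integral_gaussian 1
  simp only [neg_mul, one_mul, hπ] at h
  refine h.congr' ?_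
  filter_upwards [eventually_gt_atTop 0] with k hk
  exact (sqrt_mul_integral_Ioi_exp_neg_mul_sq hk b).symm

theorem tendsto_sqrt_mul_integral_Ioi_exp_neg_mul_sq_of_pos {b : ℝ} (hb : 0 < b) :
    Tendsto (fun k => √k * ∫ s in Ioi b, exp (-k * s ^ 2)) atTop (𝓝 0) := by
  have h := (tendsto_setIntegral_Ioi_atTop (integrable_exp_neg_mul_sq one_pos)).comp
    (tendsto_sqrt_atTop.atTop_mul_const hb)
  simp only [neg_mul, one_mul] at h
  refine h.congr' ?_
  filter_upwards [eventually_gt_atTop 0] with k hk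
  exact (sqrt_mul_integral_Ioi_exp_neg_mul_sq hk b).symm

theorem tendsto_exp_neg_mul_sq_div_sqrt (a : ℝ) :
    Tendsto (fun k => exp (-k * a ^ 2) / √k) atTop (𝓝 0) := by
  refine squeeze_zero' (.of_forall fun k => by positivity) ?_
    (tendsto_inv_atTop_zero.comp tendsto_sqrt_atTop)
  filter_upwards [eventually_ge_atTop 0] with k hk
  rw [div_eq_mul_inv]
  exact mul_le_of_le_one_left (by positivity) (exp_le_one_iff.2 (by nlinarith [sq_nonneg a]))

end Gaussian

theorem rpow_natCast_add_half {x : ℝ} (hx : 0 ≤ x) (n : ℕ) :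
    x ^ ((n : ℝ) + 1 / 2) = x ^ n * √x := by
  rw [rpow_add' hx (by positivity), rpow_natCast, sqrt_eq_rpow]

theorem Erel_integrand_eq {k v g : ℝ} (hk : k ≠ 0) (hv : v ≠ 0) (hg : g ≠ 0) :
    exp (-k * (v - g) ^ 2) * ((1 - exp (-(4 * k * v * g))) / (4 * k * v * g)) * g ^ 2 =
      (g * exp (-k * (g - v) ^ 2) - g * exp (-k * (g + v) ^ 2)) / (4 * k * v) := by
  have hexp : exp (-k * (v - g) ^ 2) * exp (-(4 * k * v * g)) = exp (-k * (g + v) ^ 2) := by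
    rw [← exp_add]
    ring_nf
  rw [← hexp, show (g - v) ^ 2 = (v - g) ^ 2 by ring]
  field_simp

theorem Erel_eq (Btil c : ℝ) {k gtr v : ℝ} (hk : 0 < k) (hgtr : 0 ≤ gtr) (hv : v ≠ 0) :
    Erel Btil c k gtr v = 4 * π ^ 2 * Btil * c / (k * v) *
      ((exp (-k * (gtr - v) ^ 2) - exp (-k * (gtr + v) ^ 2)) / (2 * k) +
        v * ((∫ s in Ioi (gtr - v), exp (-k * s ^ 2)) +
          ∫ s in Ioi (gtr + v), exp (-k * s ^ 2))) := by
  have hminus := integral_Ioi_mul_exp_neg_mul_sub_sq hk gtr v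
  have hplus := integral_Ioi_mul_exp_neg_mul_sub_sq hk gtr (-v)
  simp only [sub_neg_eq_add] at hplus
  rw [Erel, setIntegral_congr_fun measurableSet_Ioi fun g hg =>
      Erel_integrand_eq hk.ne' hv (hgtr.trans_lt hg).ne', integral_div,
    integral_sub (integrable_mul_exp_neg_mul_sub_sq hk v).integrableOn
      (by simpa only [sub_neg_eq_add] using
        (integrable_mul_exp_neg_mul_sub_sq hk (-v)).restrict),
    hminus, hplus]
  field_simp
  ring

theorem Erel_asymptotics_interior_general (c Btil gtr v : ℝ)
    (hgtr : 0 < gtr) (hgv : gtr < v) :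
    Tendsto (fun k : ℝ => k ^ ((3 : ℝ) / 2) * Erel Btil c k gtr v) atTop
      (nhds (4 * π ^ ((5 : ℝ) / 2) * Btil * c)) := by
  have hv : 0 < v := hgtr.trans hgv
  have hlim := (((((tendsto_exp_neg_mul_sq_div_sqrt (gtr - v)).sub
    (tendsto_exp_neg_mul_sq_div_sqrt (gtr + v))).div_const (2 * v)).add
    (tendsto_sqrt_mul_integral_Ioi_exp_neg_mul_sq_of_neg (sub_neg.2 hgv))).add
    (tendsto_sqrt_mul_integral_Ioi_exp_neg_mul_sq_of_pos (add_pos hgtr hv))).const_mul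
    (4 * π ^ 2 * Btil * c)
  rw [show (5 : ℝ) / 2 = (2 : ℕ) + 1 / 2 by norm_num, rpow_natCast_add_half pi_pos.le]
  convert hlim.congr' ?_ using 2
  · ring
  filter_upwards [eventually_gt_atTop 0] with k hk
  rw [Erel_eq Btil c hk hgtr.le hv.ne', show (3 : ℝ) / 2 = (1 : ℕ) + 1 / 2 by norm_num,
    rpow_natCast_add_half hk.le]
  field_simp
  rw [sq_sqrt hk.le]
  ring

/-- for `0 < g_tr < v`, `k^{3/2} E_rel(g_tr, v) → 4 π^{5/2} B̃ c` as `k → ∞`;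
equivalently `E_rel(g_tr, v) ∼ 4π B̃ c (π/k)^{3/2}`. -/
theorem Erel_asymptotics_interior (c Btil gtr v : ℝ) (hc : 0 < c) (hB : 0 < Btil)
    (hgtr : 0 < gtr) (hgv : gtr < v) :
    Tendsto (fun k : ℝ => k ^ ((3 : ℝ) / 2) * Erel Btil c k gtr v) atTop
      (nhds (4 * π ^ ((5 : ℝ) / 2) * Btil * c)) :=
  Erel_asymptotics_interior_general c Btil gtr v hgtr hgv

end
end

section
/- Fix c, B̃, v > 0 and set λ = 0 and g_tr = v. Then lim_{k→∞} k^{3/2} · E_rel(v, v) = 2 π^{5/2} B̃ c, where E_rel(v, v) := 16π² B̃ c ∫_{v}^{∞} exp(−k(v−g)²) · [(1 − exp(−4kvg))/(4kvg)] · g² dg. That is, when the truncation parameter equals the speed, the error bound is asymptotically half of its value in the interior case: E_rel(v, v) ∼ 2π B̃ c (π/k)^{3/2} as k → ∞. -/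
/-!
On `g > v` the integrand equals `e^{-k(g-v)²} · (1 - e^{-4kvg}) g / (4kv)`, and the factor
`(1 - e^{-4kvg}) g`, increasing in `g`, lies between its endpoint value `(1 - e^{-4kv²}) v` and
`g = v + (g - v)`.
So the integral is squeezed between the zeroth and first moments of the Gaussian `e^{-k(g-v)²}` on
the half line `g > v`, namely `√(π/k)/2` and `1/(2k)`. After multiplying by `k^{3/2}` both bounds
tend to `√π/8`, the first moment contributing only `O(k^{-1/2})`; the answer is half the interior
value because only half of the Gaussian mass lies beyond `g = v`.
-/

open MeasureTheory Real Filter Set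

noncomputable section

theorem setIntegral_Ioi_comp_sub_right {E : Type*} [NormedAddCommGroup E] [NormedSpace ℝ E]
    (f : ℝ → E) (v : ℝ) : ∫ x in Ioi v, f (x - v) = ∫ x in Ioi 0, f x := by
  have h := (measurePreserving_add_right (volume : Measure ℝ) v).setIntegral_preimage_emb
    (measurableEmbedding_addRight v) (fun x => f (x - v)) (Ioi v)
  simpa using h.symm

theorem integral_mul_exp_neg_mul_sq_Ioi {b : ℝ} (hb : 0 < b) :
    ∫ x in Ioi 0, x * exp (-b * x ^ 2) = (2 * b)⁻¹ := by
  have h := integral_mul_cexp_neg_mul_sq (b := (b : ℂ)) (by simpa using hb)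
  rw [← Complex.ofReal_inj, ← integral_complex_ofReal]
  push_cast
  simpa [← Complex.ofReal_exp] using h

theorem integral_exp_neg_mul_sq_sub_Ioi (k v : ℝ) :
    ∫ g in Ioi v, exp (-k * (g - v) ^ 2) = √(π / k) / 2 :=
  (setIntegral_Ioi_comp_sub_right (fun x => exp (-k * x ^ 2)) v).trans (integral_gaussian_Ioi k)

theorem integrable_exp_neg_mul_sq_sub {k : ℝ} (hk : 0 < k) (v : ℝ) :
    Integrable fun g => exp (-k * (g - v) ^ 2) :=
  (integrable_exp_neg_mul_sq hk).comp_sub_right v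

theorem integrable_mul_exp_neg_mul_sq_sub {k : ℝ} (hk : 0 < k) (v : ℝ) :
    Integrable fun g => g * exp (-k * (g - v) ^ 2) := by
  have h := ((integrable_mul_exp_neg_mul_sq hk).comp_sub_right v).add
    ((integrable_exp_neg_mul_sq_sub hk v).const_mul v)
  refine h.congr (.of_forall fun g => ?_)
  simp only [Pi.add_apply]
  ring

theorem integral_mul_exp_neg_mul_sq_sub_Ioi {k : ℝ} (hk : 0 < k) (v : ℝ) :
    ∫ g in Ioi v, g * exp (-k * (g - v) ^ 2) = v * (√(π / k) / 2) + (2 * k)⁻¹ := by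
  have hsplit : ∀ g, g * exp (-k * (g - v) ^ 2) =
      v * exp (-k * (g - v) ^ 2) + (g - v) * exp (-k * (g - v) ^ 2) := fun g => by ring
  simp_rw [hsplit]
  rw [integral_add ((integrable_exp_neg_mul_sq_sub hk v).const_mul v).integrableOn
      ((integrable_mul_exp_neg_mul_sq hk).comp_sub_right v).integrableOn,
    integral_const_mul, integral_exp_neg_mul_sq_sub_Ioi,
    setIntegral_Ioi_comp_sub_right (fun x => x * exp (-k * x ^ 2)),
    integral_mul_exp_neg_mul_sq_Ioi hk]

theorem monotoneOn_one_sub_exp_neg_mul_mul {a : ℝ} (ha : 0 ≤ a) :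
    MonotoneOn (fun g => (1 - exp (-(a * g))) * g) (Ici 0) := by
  intro x (hx : 0 ≤ x) y (hy : 0 ≤ y) hxy
  refine mul_le_mul (by gcongr) hxy hx ?_
  simpa using mul_nonneg ha hy

theorem one_sub_exp_neg_mul_mul_le (a : ℝ) {g : ℝ} (hg : 0 ≤ g) :
    (1 - exp (-(a * g))) * g ≤ g :=
  mul_le_of_le_one_left hg (sub_le_self _ (exp_pos _).le)

theorem integrableOn_exp_neg_mul_sq_sub_mul_one_sub_exp {k : ℝ} (hk : 0 < k) {a v : ℝ}
    (ha : 0 ≤ a) (hv : 0 ≤ v) :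
    IntegrableOn (fun g => exp (-k * (g - v) ^ 2) * ((1 - exp (-(a * g))) * g)) (Ioi v) := by
  refine (integrable_mul_exp_neg_mul_sq_sub hk v).integrableOn.mono'
    (by fun_prop : Continuous _).aestronglyMeasurable ?_
  refine (ae_restrict_iff' measurableSet_Ioi).2 (.of_forall fun g (hg : v < g) => ?_)
  have hg0 : 0 ≤ g := hv.trans hg.le
  have hφ := monotoneOn_one_sub_exp_neg_mul_mul ha self_mem_Ici hg0 hg0
  rw [norm_of_nonneg (mul_nonneg (exp_pos _).le (by simpa using hφ)), mul_comm g]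
  exact mul_le_mul_of_nonneg_left (one_sub_exp_neg_mul_mul_le a hg0) (exp_pos _).le

theorem le_integral_exp_neg_mul_sq_sub_mul_one_sub_exp {k : ℝ} (hk : 0 < k) {a v : ℝ}
    (ha : 0 ≤ a) (hv : 0 ≤ v) :
    √(π / k) / 2 * ((1 - exp (-(a * v))) * v) ≤
      ∫ g in Ioi v, exp (-k * (g - v) ^ 2) * ((1 - exp (-(a * g))) * g) := by
  rw [← integral_exp_neg_mul_sq_sub_Ioi k v, ← integral_mul_const]
  refine setIntegral_mono_on ((integrable_exp_neg_mul_sq_sub hk v).integrableOn.mul_const _)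
    (integrableOn_exp_neg_mul_sq_sub_mul_one_sub_exp hk ha hv) measurableSet_Ioi
    fun g (hg : v < g) => ?_
  exact mul_le_mul_of_nonneg_left
    (monotoneOn_one_sub_exp_neg_mul_mul ha hv (hv.trans hg.le) hg.le) (exp_pos _).le

theorem integral_exp_neg_mul_sq_sub_mul_one_sub_exp_le {k : ℝ} (hk : 0 < k) {a v : ℝ}
    (ha : 0 ≤ a) (hv : 0 ≤ v) :
    ∫ g in Ioi v, exp (-k * (g - v) ^ 2) * ((1 - exp (-(a * g))) * g) ≤
      v * (√(π / k) / 2) + (2 * k)⁻¹ := by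
  rw [← integral_mul_exp_neg_mul_sq_sub_Ioi hk v]
  refine setIntegral_mono_on (integrableOn_exp_neg_mul_sq_sub_mul_one_sub_exp hk ha hv)
    (integrable_mul_exp_neg_mul_sq_sub hk v).integrableOn measurableSet_Ioi
    fun g (hg : v < g) => ?_
  rw [mul_comm g]
  exact mul_le_mul_of_nonneg_left (one_sub_exp_neg_mul_mul_le a (hv.trans hg.le)) (exp_pos _).le

def boundaryIntegral (k v : ℝ) : ℝ :=
  ∫ g in Ioi v, exp (-k * (v - g) ^ 2) * ((1 - exp (-(4 * k * v * g))) / (4 * k * v * g)) * g ^ 2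

theorem boundaryIntegral_eq {k v : ℝ} (hk : 0 < k) (hv : 0 < v) :
    boundaryIntegral k v =
      (4 * k * v)⁻¹ *
        ∫ g in Ioi v, exp (-k * (g - v) ^ 2) * ((1 - exp (-(4 * k * v * g))) * g) := by
  rw [boundaryIntegral, ← integral_const_mul]
  refine setIntegral_congr_fun measurableSet_Ioi fun g (hg : v < g) => ?_
  have hg0 : g ≠ 0 := (hv.trans hg).ne'
  rw [sub_sq_comm]
  field_simp

theorem rpow_three_halves {x : ℝ} (hx : 0 ≤ x) : x ^ (3 / 2 : ℝ) = x * √x := by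
  rw [show (3 / 2 : ℝ) = 1 + 1 / 2 by norm_num, rpow_add' hx (by norm_num), rpow_one,
    sqrt_eq_rpow]

theorem le_rpow_mul_boundaryIntegral {k v : ℝ} (hk : 0 < k) (hv : 0 < v) :
    (1 - exp (-(4 * k * v * v))) * (√π / 8) ≤ k ^ (3 / 2 : ℝ) * boundaryIntegral k v := by
  have hJ := le_integral_exp_neg_mul_sq_sub_mul_one_sub_exp hk (a := 4 * k * v) (by positivity)
    hv.le
  rw [boundaryIntegral_eq hk hv, ← mul_assoc]
  refine Eq.trans_le ?_ (mul_le_mul_of_nonneg_left hJ (by positivity))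
  rw [rpow_three_halves hk.le, sqrt_div pi_pos.le]
  field_simp
  ring

theorem rpow_mul_boundaryIntegral_le {k v : ℝ} (hk : 0 < k) (hv : 0 < v) :
    k ^ (3 / 2 : ℝ) * boundaryIntegral k v ≤ √π / 8 + (8 * v * √k)⁻¹ := by
  have hJ := integral_exp_neg_mul_sq_sub_mul_one_sub_exp_le hk (a := 4 * k * v) (by positivity)
    hv.le
  rw [boundaryIntegral_eq hk hv, ← mul_assoc]
  refine (mul_le_mul_of_nonneg_left hJ (by positivity)).trans_eq ?_
  rw [rpow_three_halves hk.le, sqrt_div pi_pos.le]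
  field_simp
  linear_combination 8 * mul_self_sqrt hk.le

theorem tendsto_rpow_mul_boundaryIntegral {v : ℝ} (hv : 0 < v) :
    Tendsto (fun k => k ^ (3 / 2 : ℝ) * boundaryIntegral k v) atTop (nhds (√π / 8)) := by
  have hlower : Tendsto (fun k => (1 - exp (-(4 * k * v * v))) * (√π / 8)) atTop
      (nhds (√π / 8)) := by
    have hlin : Tendsto (fun k => -(4 * k * v * v)) atTop atBot :=
      tendsto_neg_atTop_atBot.comp
        ((tendsto_id.const_mul_atTop (by positivity : (0 : ℝ) < 4)).atTop_mul_const
          (by positivity : 0 < v * v) |>.congr fun k => by simp only [id]; ring)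
    simpa using ((tendsto_exp_atBot.comp hlin).const_sub 1).mul_const (√π / 8)
  have hupper : Tendsto (fun k => √π / 8 + (8 * v * √k)⁻¹) atTop (nhds (√π / 8)) := by
    simpa using (tendsto_sqrt_atTop.const_mul_atTop (by positivity : 0 < 8 * v)).inv_tendsto_atTop
      |>.const_add (√π / 8)
  refine tendsto_of_tendsto_of_tendsto_of_le_of_le' hlower hupper ?_ ?_ <;>
    filter_upwards [eventually_gt_atTop 0] with k hk
  exacts [le_rpow_mul_boundaryIntegral hk hv, rpow_mul_boundaryIntegral_le hk hv]

theorem Erel_asymptotics_boundary_general (c Btil v : ℝ) (hv : 0 < v) :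
    Tendsto (fun k : ℝ => k ^ ((3 : ℝ) / 2) * Erel Btil c k v v) atTop
      (nhds (2 * π ^ ((5 : ℝ) / 2) * Btil * c)) := by
  have hconst : 16 * π ^ 2 * Btil * c * (√π / 8) = 2 * π ^ ((5 : ℝ) / 2) * Btil * c := by
    rw [show (5 / 2 : ℝ) = 2 + 1 / 2 by norm_num, rpow_add pi_pos, rpow_two, ← sqrt_eq_rpow]
    ring
  rw [← hconst]
  refine ((tendsto_rpow_mul_boundaryIntegral hv).const_mul (16 * π ^ 2 * Btil * c)).congr
    fun k => ?_
  rw [Erel, ← boundaryIntegral]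
  ring

/-- at the boundary case `g_tr = v > 0`,
`k^{3/2} E_rel(v, v) → 2 π^{5/2} B̃ c` as `k → ∞`; i.e. `E_rel(v,v) ∼ 2π B̃ c (π/k)^{3/2}`,
half of the interior-case value. -/
theorem Erel_asymptotics_boundary (c Btil v : ℝ) (hc : 0 < c) (hB : 0 < Btil) (hv : 0 < v) :
    Tendsto (fun k : ℝ => k ^ ((3 : ℝ) / 2) * Erel Btil c k v v) atTop
      (nhds (2 * π ^ ((5 : ℝ) / 2) * Btil * c)) :=
  Erel_asymptotics_boundary_general c Btil v hv

end
end

section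
/- For all c, k, B̃ > 0 and all 0 < v < g_tr, with λ = 0, the non-asymptotic bound E_rel(g_tr, v) ≤ 2π² B̃ c g_tr exp(−k(g_tr − v)²) / (k² v (g_tr − v)) holds, where E_rel(g_tr, v) := 16π² B̃ c ∫_{g_tr}^{∞} exp(−k(v−g)²) · [(1 − exp(−4kvg))/(4kvg)] · g² dg. -/
/-! Since `(1 - e^{-t})/t ≤ 1/t` and, for `g ≥ g_tr > v`, `g ≤ g_tr (g - v)/(g_tr - v)`, the integrand
is dominated by `g_tr/(4kv(g_tr - v)) · (g - v) e^{-k(g - v)²}`, whose integral over `(g_tr, ∞)` is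
computed exactly from the antiderivative `-e^{-k(g - v)²}/(2k)`. -/

open MeasureTheory Real Filter

noncomputable section

lemma one_sub_exp_neg_div_nonneg (t : ℝ) : 0 ≤ (1 - exp (-t)) / t := by
  rcases le_total 0 t with ht | ht
  · exact div_nonneg (sub_nonneg.mpr (exp_le_one_iff.mpr (neg_nonpos.mpr ht))) ht
  · exact div_nonneg_of_nonpos (sub_nonpos.mpr (one_le_exp_iff.mpr (neg_nonneg.mpr ht))) ht

lemma one_sub_exp_neg_div_le_inv {t : ℝ} (ht : 0 < t) : (1 - exp (-t)) / t ≤ t⁻¹ := by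
  rw [inv_eq_one_div]
  gcongr
  linarith [exp_pos (-t)]

def erelIntegrand (k v g : ℝ) : ℝ :=
  exp (-k * (v - g) ^ 2) * ((1 - exp (-(4 * k * v * g))) / (4 * k * v * g)) * g ^ 2

lemma Erel_eq_integral_erelIntegrand (Btil c k gtr v : ℝ) :
    Erel Btil c k gtr v = 16 * π ^ 2 * Btil * c * ∫ g in Set.Ioi gtr, erelIntegrand k v g :=
  rfl

lemma erelIntegrand_nonneg (k v g : ℝ) : 0 ≤ erelIntegrand k v g :=
  mul_nonneg (mul_nonneg (exp_pos _).le (one_sub_exp_neg_div_nonneg _)) (sq_nonneg g)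

lemma erelIntegrand_le {k v gtr g : ℝ} (hk : 0 < k) (hv : 0 < v) (hvg : v < gtr) (hg : gtr ≤ g) :
    erelIntegrand k v g ≤
      gtr / (4 * k * v * (gtr - v)) * ((g - v) * exp (-k * (g - v) ^ 2)) := by
  have hg0 : 0 < g := hv.trans (hvg.trans_le hg)
  have hgtr_v : 0 < gtr - v := sub_pos.mpr hvg
  have hg_le : g ≤ gtr * (g - v) / (gtr - v) := by
    rw [le_div_iff₀ hgtr_v]
    nlinarith
  calc erelIntegrand k v g
      ≤ exp (-k * (g - v) ^ 2) * (4 * k * v * g)⁻¹ * g ^ 2 := by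
        rw [erelIntegrand, ← neg_sub g v, neg_sq]
        gcongr
        exact one_sub_exp_neg_div_le_inv (by positivity)
    _ = exp (-k * (g - v) ^ 2) * g / (4 * k * v) := by field_simp
    _ ≤ exp (-k * (g - v) ^ 2) * (gtr * (g - v) / (gtr - v)) / (4 * k * v) := by gcongr
    _ = gtr / (4 * k * v * (gtr - v)) * ((g - v) * exp (-k * (g - v) ^ 2)) := by field_simp

section GaussianTail

variable {k v a : ℝ}

lemma hasDerivAt_neg_exp_neg_mul_sub_sq_div (hk : k ≠ 0) (x : ℝ) :
    HasDerivAt (fun g => -exp (-k * (g - v) ^ 2) / (2 * k))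
      ((x - v) * exp (-k * (x - v) ^ 2)) x := by
  have hinner : HasDerivAt (fun g : ℝ => -k * (g - v) ^ 2) (-k * (2 * (x - v))) x := by
    simpa using (((hasDerivAt_id x).sub_const v).pow 2).const_mul (-k)
  refine (hinner.exp.neg.div_const (2 * k)).congr_deriv ?_
  field_simp

lemma tendsto_neg_exp_neg_mul_sub_sq_div_atTop (hk : 0 < k) :
    Tendsto (fun g => -exp (-k * (g - v) ^ 2) / (2 * k)) atTop (nhds 0) := by
  have hsq : Tendsto (fun g : ℝ => (g - v) ^ 2) atTop atTop :=
    (tendsto_pow_atTop two_ne_zero).comp (tendsto_atTop_add_const_right _ (-v) tendsto_id)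
  have hexp : Tendsto (fun g : ℝ => exp (-k * (g - v) ^ 2)) atTop (nhds 0) :=
    tendsto_exp_atBot.comp (hsq.const_mul_atTop_of_neg (neg_lt_zero.mpr hk))
  simpa using hexp.neg.div_const (2 * k)

lemma sub_mul_exp_neg_mul_sub_sq_nonneg (hva : v ≤ a) {x : ℝ} (hx : x ∈ Set.Ioi a) :
    0 ≤ (x - v) * exp (-k * (x - v) ^ 2) :=
  mul_nonneg (sub_nonneg.mpr (hva.trans (le_of_lt hx))) (exp_pos _).le

lemma integrableOn_Ioi_sub_mul_exp_neg_mul_sub_sq (hk : 0 < k) (hva : v ≤ a) :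
    IntegrableOn (fun x => (x - v) * exp (-k * (x - v) ^ 2)) (Set.Ioi a) :=
  integrableOn_Ioi_deriv_of_nonneg' (fun x _ => hasDerivAt_neg_exp_neg_mul_sub_sq_div hk.ne' x)
    (fun _ => sub_mul_exp_neg_mul_sub_sq_nonneg hva) (tendsto_neg_exp_neg_mul_sub_sq_div_atTop hk)

lemma integral_Ioi_sub_mul_exp_neg_mul_sub_sq (hk : 0 < k) (hva : v ≤ a) :
    ∫ x in Set.Ioi a, (x - v) * exp (-k * (x - v) ^ 2) = exp (-k * (a - v) ^ 2) / (2 * k) := by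
  rw [integral_Ioi_of_hasDerivAt_of_nonneg'
    (fun x _ => hasDerivAt_neg_exp_neg_mul_sub_sq_div hk.ne' x)
    (fun _ => sub_mul_exp_neg_mul_sub_sq_nonneg hva) (tendsto_neg_exp_neg_mul_sub_sq_div_atTop hk)]
  ring

end GaussianTail

lemma integral_erelIntegrand_le {k v gtr : ℝ} (hk : 0 < k) (hv : 0 < v) (hvg : v < gtr) :
    ∫ g in Set.Ioi gtr, erelIntegrand k v g ≤
      gtr / (4 * k * v * (gtr - v)) * (exp (-k * (gtr - v) ^ 2) / (2 * k)) := by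
  rw [← integral_Ioi_sub_mul_exp_neg_mul_sub_sq hk hvg.le, ← integral_const_mul]
  refine integral_mono_of_nonneg (Eventually.of_forall (erelIntegrand_nonneg k v))
    ((integrableOn_Ioi_sub_mul_exp_neg_mul_sub_sq hk hvg.le).const_mul _) ?_
  filter_upwards [ae_restrict_mem measurableSet_Ioi] with g hg
  exact erelIntegrand_le hk hv hvg (le_of_lt hg)

/-- for all `c, k, B̃ > 0` and `0 < v < g_tr`, the non-asymptotic bound
`E_rel(g_tr, v) ≤ 2π² B̃ c g_tr e^{−k(g_tr − v)²} / (k² v (g_tr − v))` holds. -/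
theorem Erel_nonasymptotic_bound (c k Btil v gtr : ℝ) (hc : 0 < c) (hk : 0 < k) (hB : 0 < Btil)
    (hv : 0 < v) (hvg : v < gtr) :
    Erel Btil c k gtr v ≤
      2 * π ^ 2 * Btil * c * gtr * Real.exp (-k * (gtr - v) ^ 2) / (k ^ 2 * v * (gtr - v)) := by
  have hgtr_v : 0 < gtr - v := sub_pos.mpr hvg
  calc Erel Btil c k gtr v
      ≤ 16 * π ^ 2 * Btil * c *
          (gtr / (4 * k * v * (gtr - v)) * (exp (-k * (gtr - v) ^ 2) / (2 * k))) := by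
        rw [Erel_eq_integral_erelIntegrand]
        gcongr
        exact integral_erelIntegrand_le hk hv hvg
    _ = 2 * π ^ 2 * Btil * c * gtr * Real.exp (-k * (gtr - v) ^ 2) / (k ^ 2 * v * (gtr - v)) := by
        field_simp
        ring

end
end

section
/- Suppose f : ℝ³ → ℝ is measurable, nonnegative, and satisfies f(v) ≤ c·exp(−k|v|²) for all v ∈ ℝ³, where c, k > 0. For v ∈ ℝ³ and g_tr > 0, define E₁(v) := ∫_{|g| ≥ g_tr} ∫_{S²} f(v + (g − |g|Θ)/2) f(v + (g + |g|Θ)/2) |g|^λ dΘ dg and E₂(v) := ∫_{|g| ≥ g_tr} ∫_{S²} f(v) f(v+g) |g|^λ dΘ dg. Then both E₁(v) and E₂(v) are finite and nonnegative, Q(f,f)(v) − Q^tr(f,f)(v) = B̃·(E₁(v) − E₂(v)), and consequently |Q(f,f)(v) − Q^tr(f,f)(v)| ≤ B̃ · max{E₁(v), E₂(v)}. -/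
/-!
Both products in the integrand evaluate `f` at two velocities whose difference has length `‖g‖`
(`w′ - v′ = ‖g‖ Θ` and `(v + g) - v = g`), so the Gaussian bound on `f` and
`‖a - b‖² ≤ 2 (‖a‖² + ‖b‖²)` dominate each of them by `c² e^{-k‖g‖²/2}`. Since
`‖g‖^λ e^{-k‖g‖²/2}` is integrable on `ℝ³` (polar coordinates), the gain and loss parts are
separately integrable in `g`, the collision integral splits as `B̃ (gain - loss)`, and
`Q - Q^tr` is the integral over the complement of the ball, which agrees a.e. with
`{‖g‖ ≥ g_tr}` because spheres are Lebesgue-null.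
-/

open MeasureTheory Real Metric Filter
open scoped RealInnerProductSpace

noncomputable section

/-- Velocity space `ℝ³`. -/
abbrev V3 : Type := EuclideanSpace ℝ (Fin 3)

/-- The surface measure on the unit sphere `S² ⊂ ℝ³` (total mass `4π`). -/
def sphereMeasure : Measure (sphere (0 : V3) 1) := (volume : Measure V3).toSphere

/-- The Boltzmann collision operator with isotropic kernel `B(g,χ) = B̃ ‖g‖^λ`:
`Q(f,f)(v) = ∫_{g ∈ ℝ³} ∫_{Θ ∈ S²} [f(v′)f(w′) − f(v)f(v+g)] B̃‖g‖^λ dΘ dg`,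
with post-collisional velocities `v′ = v + (g − ‖g‖Θ)/2`, `w′ = v + (g + ‖g‖Θ)/2`. -/
def Qop (Btil lam : ℝ) (f : V3 → ℝ) (v : V3) : ℝ :=
  ∫ g : V3, ∫ Θ : sphere (0 : V3) 1,
    (f (v + (1 / 2 : ℝ) • (g - ‖g‖ • (Θ : V3))) * f (v + (1 / 2 : ℝ) • (g + ‖g‖ • (Θ : V3)))
        - f v * f (v + g)) * (Btil * ‖g‖ ^ lam) ∂sphereMeasure

/-- The truncated Boltzmann collision operator: the same integral with the `g`-integration
restricted to the ball `{g : ‖g‖ ≤ g_tr}`. -/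
def Qtr (Btil lam gtr : ℝ) (f : V3 → ℝ) (v : V3) : ℝ :=
  ∫ g in closedBall (0 : V3) gtr, ∫ Θ : sphere (0 : V3) 1,
    (f (v + (1 / 2 : ℝ) • (g - ‖g‖ • (Θ : V3))) * f (v + (1 / 2 : ℝ) • (g + ‖g‖ • (Θ : V3)))
        - f v * f (v + g)) * (Btil * ‖g‖ ^ lam) ∂sphereMeasure

/-- The gain-term tail `E₁(v) = ∫_{‖g‖ ≥ g_tr} ∫_{S²} f(v′) f(w′) ‖g‖^λ dΘ dg`. -/
def Eone (lam gtr : ℝ) (f : V3 → ℝ) (v : V3) : ℝ :=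
  ∫ g in {g : V3 | gtr ≤ ‖g‖}, ∫ Θ : sphere (0 : V3) 1,
    f (v + (1 / 2 : ℝ) • (g - ‖g‖ • (Θ : V3))) * f (v + (1 / 2 : ℝ) • (g + ‖g‖ • (Θ : V3))) *
      ‖g‖ ^ lam ∂sphereMeasure

/-- The loss-term tail `E₂(v) = ∫_{‖g‖ ≥ g_tr} ∫_{S²} f(v) f(v+g) ‖g‖^λ dΘ dg`. -/
def Etwo (lam gtr : ℝ) (f : V3 → ℝ) (v : V3) : ℝ :=
  ∫ g in {g : V3 | gtr ≤ ‖g‖}, ∫ Θ : sphere (0 : V3) 1,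
    f v * f (v + g) * ‖g‖ ^ lam ∂sphereMeasure

theorem integrable_rpow_norm_mul_exp_neg_mul_sq {E : Type*} [NormedAddCommGroup E]
    [NormedSpace ℝ E] [Nontrivial E] [FiniteDimensional ℝ E] [MeasurableSpace E] [BorelSpace E]
    (μ : Measure E) [μ.IsAddHaarMeasure] {b s : ℝ} (hb : 0 < b)
    (hs : -(Module.finrank ℝ E : ℝ) < s) :
    Integrable (fun x : E => ‖x‖ ^ s * exp (-b * ‖x‖ ^ 2)) μ := by
  rw [integrable_fun_norm_addHaar μ (f := fun y => y ^ s * exp (-b * y ^ 2))]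
  have hdim : ((Module.finrank ℝ E - 1 : ℕ) : ℝ) = Module.finrank ℝ E - 1 :=
    Nat.cast_pred Module.finrank_pos
  refine (integrableOn_rpow_mul_exp_neg_mul_sq hb (s := s + (Module.finrank ℝ E - 1))
    (by linarith)).congr_fun (fun y (hy : 0 < y) => ?_) measurableSet_Ioi
  rw [smul_eq_mul, ← mul_assoc, ← rpow_natCast, hdim, ← rpow_add hy, add_comm]

theorem integral_sub_setIntegral_closedBall {E : Type*} [NormedAddCommGroup E]
    [NormedSpace ℝ E] [Nontrivial E] [FiniteDimensional ℝ E] [MeasurableSpace E] [BorelSpace E]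
    {F : Type*} [NormedAddCommGroup F] [NormedSpace ℝ F] {μ : Measure E} [μ.IsAddHaarMeasure]
    {φ : E → F} (hφ : Integrable φ μ) (r : ℝ) :
    ∫ x, φ x ∂μ - ∫ x in closedBall 0 r, φ x ∂μ = ∫ x in {x | r ≤ ‖x‖}, φ x ∂μ := by
  have hball : ball (0 : E) r =ᵐ[μ] closedBall 0 r := by
    rw [← closedBall_sdiff_sphere]
    exact sdiff_null_ae_eq_self (μ.addHaar_sphere 0 r)
  have hcompl : {x : E | r ≤ ‖x‖} = (ball 0 r)ᶜ := by ext; simp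
  rw [← setIntegral_congr_set hball, hcompl, ← integral_add_compl measurableSet_ball hφ,
    add_sub_cancel_left]

theorem integrable_integral_of_norm_le {α β : Type*} [MeasurableSpace α] [MeasurableSpace β]
    {G : Type*} [NormedAddCommGroup G] [NormedSpace ℝ G] {μ : Measure α} {ν : Measure β}
    [IsFiniteMeasure ν] {F : α → β → G} {D : α → ℝ}
    (hD : Integrable D μ) (hF : AEStronglyMeasurable (Function.uncurry F) (μ.prod ν))
    (hFD : ∀ a b, ‖F a b‖ ≤ D a) :
    Integrable (fun a => ∫ b, F a b ∂ν) μ := by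
  have hprod : Integrable (Function.uncurry F) (μ.prod ν) :=
    (hD.mul_prod (integrable_const (1 : ℝ))).mono' hF
      (Eventually.of_forall fun ⟨a, b⟩ => by simpa using hFD a b)
  exact hprod.integral_prod_left

theorem mul_le_sq_mul_exp_of_le_gaussian {E : Type*} [SeminormedAddCommGroup E] {f : E → ℝ}
    {c k : ℝ} (hk : 0 ≤ k) (hf_nonneg : ∀ x, 0 ≤ f x)
    (hf_bound : ∀ x, f x ≤ c * exp (-k * ‖x‖ ^ 2)) (a b : E) :
    f a * f b ≤ c ^ 2 * exp (-(k / 2) * ‖b - a‖ ^ 2) := by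
  have hsq : ‖b - a‖ ^ 2 ≤ 2 * (‖a‖ ^ 2 + ‖b‖ ^ 2) := by
    nlinarith [norm_sub_le b a, norm_nonneg (b - a), sq_nonneg (‖a‖ - ‖b‖)]
  calc f a * f b ≤ (c * exp (-k * ‖a‖ ^ 2)) * (c * exp (-k * ‖b‖ ^ 2)) :=
        mul_le_mul (hf_bound a) (hf_bound b) (hf_nonneg b) ((hf_nonneg a).trans (hf_bound a))
    _ = c ^ 2 * exp (-k * (‖a‖ ^ 2 + ‖b‖ ^ 2)) := by rw [mul_add, exp_add]; ring
    _ ≤ c ^ 2 * exp (-(k / 2) * ‖b - a‖ ^ 2) :=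
        mul_le_mul_of_nonneg_left (exp_le_exp.mpr (by nlinarith)) (sq_nonneg c)

theorem norm_add_half_smul_add_sub {E : Type*} [NormedAddCommGroup E] [NormedSpace ℝ E]
    (v g θ : E) (hθ : ‖θ‖ = 1) :
    ‖(v + (1 / 2 : ℝ) • (g + ‖g‖ • θ)) - (v + (1 / 2 : ℝ) • (g - ‖g‖ • θ))‖ = ‖g‖ := by
  have : (v + (1 / 2 : ℝ) • (g + ‖g‖ • θ)) - (v + (1 / 2 : ℝ) • (g - ‖g‖ • θ)) = ‖g‖ • θ := by
    module
  rw [this, norm_smul, hθ, norm_norm, mul_one]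

instance : IsFiniteMeasure sphereMeasure := by
  unfold sphereMeasure
  infer_instance

def gainKernel (lam : ℝ) (f : V3 → ℝ) (v g : V3) (Θ : sphere (0 : V3) 1) : ℝ :=
  f (v + (1 / 2 : ℝ) • (g - ‖g‖ • (Θ : V3))) * f (v + (1 / 2 : ℝ) • (g + ‖g‖ • (Θ : V3))) *
    ‖g‖ ^ lam

def lossKernel (lam : ℝ) (f : V3 → ℝ) (v g : V3) : ℝ :=
  f v * f (v + g) * ‖g‖ ^ lam

section Kernels

variable {c k lam : ℝ} {f : V3 → ℝ}

theorem gainKernel_nonneg (hf_nonneg : ∀ x, 0 ≤ f x) (v g : V3) (Θ : sphere (0 : V3) 1) :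
    0 ≤ gainKernel lam f v g Θ :=
  mul_nonneg (mul_nonneg (hf_nonneg _) (hf_nonneg _)) (rpow_nonneg (norm_nonneg g) lam)

theorem lossKernel_nonneg (hf_nonneg : ∀ x, 0 ≤ f x) (v g : V3) : 0 ≤ lossKernel lam f v g :=
  mul_nonneg (mul_nonneg (hf_nonneg _) (hf_nonneg _)) (rpow_nonneg (norm_nonneg g) lam)

theorem gainKernel_le (hk : 0 ≤ k) (hf_nonneg : ∀ x, 0 ≤ f x)
    (hf_bound : ∀ x, f x ≤ c * exp (-k * ‖x‖ ^ 2)) (v g : V3) (Θ : sphere (0 : V3) 1) :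
    gainKernel lam f v g Θ ≤ c ^ 2 * (‖g‖ ^ lam * exp (-(k / 2) * ‖g‖ ^ 2)) := by
  have hprod := mul_le_sq_mul_exp_of_le_gaussian hk hf_nonneg hf_bound
    (v + (1 / 2 : ℝ) • (g - ‖g‖ • (Θ : V3))) (v + (1 / 2 : ℝ) • (g + ‖g‖ • (Θ : V3)))
  rw [norm_add_half_smul_add_sub v g Θ (norm_eq_of_mem_sphere Θ)] at hprod
  calc gainKernel lam f v g Θ ≤ c ^ 2 * exp (-(k / 2) * ‖g‖ ^ 2) * ‖g‖ ^ lam :=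
        mul_le_mul_of_nonneg_right hprod (rpow_nonneg (norm_nonneg g) lam)
    _ = c ^ 2 * (‖g‖ ^ lam * exp (-(k / 2) * ‖g‖ ^ 2)) := by ring

theorem lossKernel_le (hk : 0 ≤ k) (hf_nonneg : ∀ x, 0 ≤ f x)
    (hf_bound : ∀ x, f x ≤ c * exp (-k * ‖x‖ ^ 2)) (v g : V3) :
    lossKernel lam f v g ≤ c ^ 2 * (‖g‖ ^ lam * exp (-(k / 2) * ‖g‖ ^ 2)) := by
  have hprod := mul_le_sq_mul_exp_of_le_gaussian hk hf_nonneg hf_bound v (v + g)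
  rw [add_sub_cancel_left] at hprod
  calc lossKernel lam f v g ≤ c ^ 2 * exp (-(k / 2) * ‖g‖ ^ 2) * ‖g‖ ^ lam :=
        mul_le_mul_of_nonneg_right hprod (rpow_nonneg (norm_nonneg g) lam)
    _ = c ^ 2 * (‖g‖ ^ lam * exp (-(k / 2) * ‖g‖ ^ 2)) := by ring

theorem integrable_collisionBound (hk : 0 < k) (hlam : -3 < lam) :
    Integrable (fun g : V3 => c ^ 2 * (‖g‖ ^ lam * exp (-(k / 2) * ‖g‖ ^ 2))) :=
  (integrable_rpow_norm_mul_exp_neg_mul_sq volume (half_pos hk)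
    (by rwa [finrank_euclideanSpace_fin])).const_mul _

theorem integrable_integral_gainKernel (hk : 0 < k) (hlam : -3 < lam) (hf_meas : Measurable f)
    (hf_nonneg : ∀ x, 0 ≤ f x) (hf_bound : ∀ x, f x ≤ c * exp (-k * ‖x‖ ^ 2)) (v : V3) :
    Integrable (fun g => ∫ Θ, gainKernel lam f v g Θ ∂sphereMeasure) :=
  integrable_integral_of_norm_le (integrable_collisionBound hk hlam)
    (by unfold gainKernel; fun_prop : Measurable _).aestronglyMeasurable
    fun g Θ => (norm_of_nonneg (gainKernel_nonneg hf_nonneg v g Θ)).trans_le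
      (gainKernel_le hk.le hf_nonneg hf_bound v g Θ)

theorem integrable_integral_lossKernel (hk : 0 < k) (hlam : -3 < lam) (hf_meas : Measurable f)
    (hf_nonneg : ∀ x, 0 ≤ f x) (hf_bound : ∀ x, f x ≤ c * exp (-k * ‖x‖ ^ 2)) (v : V3) :
    Integrable (fun g => ∫ _ : sphere (0 : V3) 1, lossKernel lam f v g ∂sphereMeasure) :=
  integrable_integral_of_norm_le (integrable_collisionBound hk hlam)
    (by unfold lossKernel; fun_prop : Measurable _).aestronglyMeasurable
    fun g _ => (norm_of_nonneg (lossKernel_nonneg hf_nonneg v g)).trans_le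
      (lossKernel_le hk.le hf_nonneg hf_bound v g)

theorem integral_collision_eq (hk : 0 ≤ k) (hf_meas : Measurable f) (hf_nonneg : ∀ x, 0 ≤ f x)
    (hf_bound : ∀ x, f x ≤ c * exp (-k * ‖x‖ ^ 2)) (Btil : ℝ) (v g : V3) :
    ∫ Θ : sphere (0 : V3) 1,
      (f (v + (1 / 2 : ℝ) • (g - ‖g‖ • (Θ : V3))) * f (v + (1 / 2 : ℝ) • (g + ‖g‖ • (Θ : V3)))
        - f v * f (v + g)) * (Btil * ‖g‖ ^ lam) ∂sphereMeasure =
      Btil * ((∫ Θ, gainKernel lam f v g Θ ∂sphereMeasure) -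
        ∫ _ : sphere (0 : V3) 1, lossKernel lam f v g ∂sphereMeasure) := by
  have hmeas : Measurable (gainKernel lam f v g) := by unfold gainKernel; fun_prop
  have hgain : Integrable (gainKernel lam f v g) sphereMeasure :=
    .of_bound hmeas.aestronglyMeasurable _ <| Eventually.of_forall fun Θ => (norm_of_nonneg (gainKernel_nonneg hf_nonneg v g Θ)).trans_le
        (gainKernel_le hk hf_nonneg hf_bound v g Θ)
  rw [← integral_sub hgain (integrable_const _), ← integral_const_mul]
  congr 1 with Θ
  simp only [gainKernel, lossKernel]
  ring

end Kernels

theorem truncation_error_split_general (c k Btil lam : ℝ) (hk : 0 < k) (hB : 0 < Btil)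
    (hlam0 : 0 ≤ lam) (f : V3 → ℝ) (hf_meas : Measurable f)
    (hf_nonneg : ∀ v, 0 ≤ f v) (hf_bound : ∀ v : V3, f v ≤ c * Real.exp (-k * ‖v‖ ^ 2))
    (gtr : ℝ) (v : V3) :
    IntegrableOn
        (fun g : V3 => ∫ Θ : sphere (0 : V3) 1,
          f (v + (1 / 2 : ℝ) • (g - ‖g‖ • (Θ : V3))) *
            f (v + (1 / 2 : ℝ) • (g + ‖g‖ • (Θ : V3))) * ‖g‖ ^ lam ∂sphereMeasure)
        {g : V3 | gtr ≤ ‖g‖} volume ∧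
      IntegrableOn
        (fun g : V3 => ∫ Θ : sphere (0 : V3) 1,
          f v * f (v + g) * ‖g‖ ^ lam ∂sphereMeasure)
        {g : V3 | gtr ≤ ‖g‖} volume ∧
      0 ≤ Eone lam gtr f v ∧ 0 ≤ Etwo lam gtr f v ∧
      Qop Btil lam f v - Qtr Btil lam gtr f v = Btil * (Eone lam gtr f v - Etwo lam gtr f v) ∧
      |Qop Btil lam f v - Qtr Btil lam gtr f v| ≤
        Btil * max (Eone lam gtr f v) (Etwo lam gtr f v) := by
  have hlam : -3 < lam := by linarith
  have hgain := integrable_integral_gainKernel hk hlam hf_meas hf_nonneg hf_bound v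
  have hloss := integrable_integral_lossKernel hk hlam hf_meas hf_nonneg hf_bound v
  have htail : MeasurableSet {g : V3 | gtr ≤ ‖g‖} :=
    measurableSet_le measurable_const measurable_norm
  have hE₁ : 0 ≤ Eone lam gtr f v :=
    setIntegral_nonneg htail fun g _ => integral_nonneg (gainKernel_nonneg hf_nonneg v g)
  have hE₂ : 0 ≤ Etwo lam gtr f v :=
    setIntegral_nonneg htail fun g _ => integral_nonneg fun _ => lossKernel_nonneg hf_nonneg v g
  have hsplit : Qop Btil lam f v - Qtr Btil lam gtr f v =
      Btil * (Eone lam gtr f v - Etwo lam gtr f v) := by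
    simp only [Qop, Qtr, integral_collision_eq hk.le hf_meas hf_nonneg hf_bound]
    have hdiff : Integrable (fun g => Btil * ((∫ Θ, gainKernel lam f v g Θ ∂sphereMeasure) -
        ∫ _ : sphere (0 : V3) 1, lossKernel lam f v g ∂sphereMeasure)) :=
      (hgain.sub hloss).const_mul Btil
    rw [integral_sub_setIntegral_closedBall hdiff,
      integral_const_mul, integral_sub hgain.integrableOn hloss.integrableOn]
    rfl
  refine ⟨hgain.integrableOn, hloss.integrableOn, hE₁, hE₂, hsplit, ?_⟩
  rw [hsplit, abs_mul, abs_of_pos hB, ← max_sub_min_eq_abs']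
  exact mul_le_mul_of_nonneg_left (sub_le_self _ (le_min hE₁ hE₂)) hB.le

/-- for `0 ≤ f ≤ c e^{−k|·|²}` measurable, the tails `E₁(v)` and `E₂(v)` are finite
(i.e. the inner integrals are integrable over `{‖g‖ ≥ g_tr}`) and nonnegative,
`Q(f,f)(v) − Q^tr(f,f)(v) = B̃ (E₁(v) − E₂(v))`, and consequently
`|Q(f,f)(v) − Q^tr(f,f)(v)| ≤ B̃ max{E₁(v), E₂(v)}`. -/
theorem truncation_error_split (c k Btil lam : ℝ) (hc : 0 < c) (hk : 0 < k) (hB : 0 < Btil)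
    (hlam0 : 0 ≤ lam) (hlam1 : lam ≤ 1) (f : V3 → ℝ) (hf_meas : Measurable f)
    (hf_nonneg : ∀ v, 0 ≤ f v) (hf_bound : ∀ v : V3, f v ≤ c * Real.exp (-k * ‖v‖ ^ 2))
    (gtr : ℝ) (hgtr : 0 < gtr) (v : V3) :
    IntegrableOn
        (fun g : V3 => ∫ Θ : sphere (0 : V3) 1,
          f (v + (1 / 2 : ℝ) • (g - ‖g‖ • (Θ : V3))) *
            f (v + (1 / 2 : ℝ) • (g + ‖g‖ • (Θ : V3))) * ‖g‖ ^ lam ∂sphereMeasure)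
        {g : V3 | gtr ≤ ‖g‖} volume ∧
      IntegrableOn
        (fun g : V3 => ∫ Θ : sphere (0 : V3) 1,
          f v * f (v + g) * ‖g‖ ^ lam ∂sphereMeasure)
        {g : V3 | gtr ≤ ‖g‖} volume ∧
      0 ≤ Eone lam gtr f v ∧ 0 ≤ Etwo lam gtr f v ∧
      Qop Btil lam f v - Qtr Btil lam gtr f v = Btil * (Eone lam gtr f v - Etwo lam gtr f v) ∧
      |Qop Btil lam f v - Qtr Btil lam gtr f v| ≤
        Btil * max (Eone lam gtr f v) (Etwo lam gtr f v) :=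
  truncation_error_split_general c k Btil lam hk hB hlam0 f hf_meas hf_nonneg hf_bound gtr v

end
end

section
/- Let R > 0, X > 0, and a ∈ ℝ³ with Y := |a| > 0 and X ≠ Y. Then ∫_{|g| ≤ R} exp(i⟨a,g⟩) · sin(|g|X)/(|g|X) dg = (2π/(p q X Y)) · [ q sin(R p) − p sin(R q) ], where p = X − Y and q = X + Y. -/
/-!
Write `a = ‖a‖ u` with `u` a unit vector and split `g = t u + w` with `w ⊥ u`. The phase
`⟨a, g⟩ = ‖a‖ t` only sees `t`, while the radial factor depends on `√(t² + ‖w‖²)`; polar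
coordinates in the plane `u^⊥` followed by `s = √(t² + r²)` turn the slice integral over `w` into
`2π ∫_{|t|}^∞ s f(s) ds`. For `f(s) = 1_{s ≤ R} sin(sX)/(sX)` this is
`2π (cos(tX) - cos(RX)) / X²` on `[-R, R]`, and the remaining one-dimensional Fourier integral is
elementary once `cos(tX)` is written as a sum of exponentials.
-/

open MeasureTheory Real Metric Module Set
open scoped RealInnerProductSpace

noncomputable section

section Slicing

variable {E F : Type*} [NormedAddCommGroup E] [InnerProductSpace ℝ E]
  [NormedAddCommGroup F] [NormedSpace ℝ F]

theorem inner_smul_add_orthogonal_eq {a : E} (ha : a ≠ 0) (t : ℝ)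
    (w : (ℝ ∙ (‖a‖⁻¹ • a))ᗮ) : ⟪a, t • (‖a‖⁻¹ • a) + w⟫ = ‖a‖ * t := by
  have ha_mem : a ∈ ℝ ∙ (‖a‖⁻¹ • a) := Submodule.mem_span_singleton.2
    ⟨‖a‖, by rw [smul_smul, mul_inv_cancel₀ (norm_ne_zero_iff.2 ha), one_smul]⟩
  rw [inner_add_right, Submodule.inner_right_of_mem_orthogonal ha_mem w.2, add_zero,
    real_inner_smul_right, real_inner_smul_right, real_inner_self_eq_norm_sq]
  field_simp

theorem norm_smul_add_orthogonal {u : E} (hu : ‖u‖ = 1) (t : ℝ) (w : (ℝ ∙ u)ᗮ) :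
    ‖t • u + w‖ = √(t ^ 2 + ‖w‖ ^ 2) := by
  have h := norm_add_sq_eq_norm_sq_add_norm_sq_real (Submodule.inner_right_of_mem_orthogonal
    (Submodule.smul_mem _ t (Submodule.mem_span_singleton_self u)) w.2)
  rw [norm_smul, hu, mul_one, Real.norm_eq_abs, abs_mul_abs_self] at h
  rw [← sqrt_sq (norm_nonneg _), sq, h, sq, sq]
  rfl

variable [FiniteDimensional ℝ E] [MeasurableSpace E] [BorelSpace E]

theorem measurePreserving_smul_add_orthogonal {u : E} (hu : ‖u‖ = 1) :
    MeasurePreserving (fun p : ℝ × (ℝ ∙ u)ᗮ => p.1 • u + (p.2 : E)) := by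
  have h1 := ((LinearIsometryEquiv.toSpanUnitSingleton u hu).measurePreserving).prod
    (MeasurePreserving.id (volume : Measure (ℝ ∙ u)ᗮ))
  rw [← Measure.volume_eq_prod] at h1
  convert (ℝ ∙ u).orthogonalDecomposition.symm.measurePreserving.comp
    ((WithLp.volume_preserving_toLp (ℝ ∙ u) (ℝ ∙ u)ᗮ).comp h1) using 1
  ext p
  simp

theorem measurableEmbedding_smul_add_orthogonal {u : E} (hu : ‖u‖ = 1) :
    MeasurableEmbedding (fun p : ℝ × (ℝ ∙ u)ᗮ => p.1 • u + (p.2 : E)) := by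
  convert (ℝ ∙ u).orthogonalDecomposition.symm.toHomeomorph.measurableEmbedding.comp
    ((MeasurableEquiv.toLp 2 _).measurableEmbedding.comp
      ((LinearIsometryEquiv.toSpanUnitSingleton u hu).toHomeomorph.measurableEmbedding.prodMap
        MeasurableEmbedding.id)) using 1
  ext p
  simp

theorem integral_eq_integral_integral_smul_add_orthogonal [CompleteSpace F] {u : E}
    (hu : ‖u‖ = 1) {f : E → F} (hf : Integrable f) :
    ∫ g, f g = ∫ t : ℝ, ∫ w : (ℝ ∙ u)ᗮ, f (t • u + w) := by
  have hmp := measurePreserving_smul_add_orthogonal hu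
  have hemb := measurableEmbedding_smul_add_orthogonal hu
  rw [← hmp.integral_comp hemb, Measure.volume_eq_prod, integral_prod]
  rw [← Measure.volume_eq_prod]
  exact (hmp.integrable_comp_emb hemb).2 hf

theorem integral_fun_norm_of_finrank_eq_two [CompleteSpace F] (hE : finrank ℝ E = 2)
    (f : ℝ → F) : ∫ w : E, f ‖w‖ = (2 * π) • ∫ r in Ioi 0, r • f r := by
  have : Nontrivial E := Module.nontrivial_of_finrank_pos (R := ℝ) (by omega)
  rw [integral_fun_norm_addHaar, measureReal_def,
    InnerProductSpace.volume_ball_of_dim_even (k := 1) (by simpa using hE), hE]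
  simp [pi_nonneg, ← Nat.cast_smul_eq_nsmul ℝ, smul_smul, mul_comm]

end Slicing

section Substitution

variable {F : Type*} [NormedAddCommGroup F] [NormedSpace ℝ F]

theorem image_sqrt_sq_add_sq_Ioi (t : ℝ) : (fun r => √(t ^ 2 + r ^ 2)) '' Ioi 0 = Ioi |t| := by
  ext s
  simp only [mem_image, mem_Ioi]
  constructor
  · rintro ⟨r, hr, rfl⟩
    rw [← sqrt_sq_eq_abs]
    exact sqrt_lt_sqrt (sq_nonneg t) (by nlinarith)
  · intro hs
    have hts : t ^ 2 < s ^ 2 := by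
      rw [← sq_abs]; exact pow_lt_pow_left₀ hs (abs_nonneg t) two_ne_zero
    refine ⟨√(s ^ 2 - t ^ 2), sqrt_pos.2 (by linarith), ?_⟩
    rw [sq_sqrt (by linarith), add_sub_cancel, sqrt_sq ((abs_nonneg t).trans hs.le)]

theorem integral_Ioi_smul_comp_sqrt_sq_add_sq (t : ℝ) (f : ℝ → F) :
    ∫ r in Ioi 0, r • f √(t ^ 2 + r ^ 2) = ∫ s in Ioi |t|, s • f s := by
  have hpos : ∀ r ∈ Ioi (0 : ℝ), 0 < t ^ 2 + r ^ 2 := fun r hr => by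
    have := mem_Ioi.1 hr; positivity
  have hsqrt : ∀ r ∈ Ioi (0 : ℝ), 0 < √(t ^ 2 + r ^ 2) := fun r hr => sqrt_pos.2 (hpos r hr)
  have hderiv : ∀ r ∈ Ioi (0 : ℝ), HasDerivWithinAt (fun r => √(t ^ 2 + r ^ 2))
      (r / √(t ^ 2 + r ^ 2)) (Ioi 0) r := by
    intro r hr
    refine (((hasDerivAt_pow 2 r).const_add (t ^ 2)).sqrt (hpos r hr).ne').hasDerivWithinAt
      |>.congr_deriv ?_
    field_simp
    norm_num
  have hinj : InjOn (fun r => √(t ^ 2 + r ^ 2)) (Ioi 0) := by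
    intro r hr r' hr' h
    have := congrArg (· ^ 2) h
    simp only [sq_sqrt (hpos r hr).le, sq_sqrt (hpos r' hr').le] at this
    nlinarith [mem_Ioi.1 hr, mem_Ioi.1 hr']
  rw [← image_sqrt_sq_add_sq_Ioi, integral_image_eq_integral_abs_deriv_smul measurableSet_Ioi
    hderiv hinj]
  refine setIntegral_congr_fun measurableSet_Ioi fun r hr => ?_
  rw [smul_smul, abs_of_pos (div_pos hr (hsqrt r hr)), div_mul_cancel₀ _ (hsqrt r hr).ne']

end Substitution

theorem integral_exp_inner_mul_comp_norm_of_finrank_eq_three {E : Type*} [NormedAddCommGroup E]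
    [InnerProductSpace ℝ E] [FiniteDimensional ℝ E] [MeasurableSpace E] [BorelSpace E]
    (hE : finrank ℝ E = 3) {a : E} (ha : a ≠ 0) {f : ℝ → ℂ}
    (hf : Integrable fun g : E => f ‖g‖) :
    ∫ g : E, Complex.exp (Complex.I * ⟪a, g⟫) * f ‖g‖ =
      (2 * π) • ∫ t : ℝ, Complex.exp (Complex.I * (‖a‖ * t)) * ∫ s in Ioi |t|, s • f s := by
  have hu : ‖‖a‖⁻¹ • a‖ = 1 := norm_smul_inv_norm ha
  have : Fact (finrank ℝ E = 2 + 1) := ⟨hE⟩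
  have hW : finrank ℝ (ℝ ∙ (‖a‖⁻¹ • a))ᗮ = 2 :=
    Submodule.finrank_orthogonal_span_singleton (norm_ne_zero_iff.1 (hu ▸ one_ne_zero))
  have hint : Integrable fun g : E => Complex.exp (Complex.I * ⟪a, g⟫) * f ‖g‖ :=
    hf.bdd_mul (c := 1) (by fun_prop) (.of_forall fun g => by
      rw [mul_comm, Complex.norm_exp_ofReal_mul_I])
  rw [integral_eq_integral_integral_smul_add_orthogonal hu hint, ← integral_smul]
  refine integral_congr_ae (.of_forall fun t => ?_)
  simp only [inner_smul_add_orthogonal_eq ha, norm_smul_add_orthogonal hu]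
  rw [integral_const_mul, integral_fun_norm_of_finrank_eq_two hW (fun r => f √(t ^ 2 + r ^ 2)),
    integral_Ioi_smul_comp_sqrt_sq_add_sq, mul_smul_comm, Complex.ofReal_mul]

theorem abs_sin_div_self_le_one (x : ℝ) : |sin x / x| ≤ 1 := by
  rcases eq_or_ne x 0 with rfl | hx
  · simp
  · rw [← sinc_of_ne_zero hx]
    exact abs_sinc_le_one x

theorem integrable_indicator_sin_div_comp_norm {E : Type*} [NormedAddCommGroup E]
    [InnerProductSpace ℝ E] [FiniteDimensional ℝ E] [MeasurableSpace E] [BorelSpace E]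
    (R X : ℝ) :
    Integrable fun g : E => (((Iic R).indicator (fun s => sin (s * X) / (s * X)) ‖g‖ : ℝ) : ℂ) := by
  have : (fun g : E => (((Iic R).indicator (fun s => sin (s * X) / (s * X)) ‖g‖ : ℝ) : ℂ)) =
      (closedBall 0 R).indicator fun g => ((sin (‖g‖ * X) / (‖g‖ * X) : ℝ) : ℂ) := by
    ext g
    by_cases hg : ‖g‖ ≤ R <;> simp [hg, indicator]
  rw [this, integrable_indicator_iff measurableSet_closedBall]
  refine Measure.integrableOn_of_bounded (M := 1) measure_closedBall_lt_top.ne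
    (Complex.measurable_ofReal.comp (by fun_prop)).aestronglyMeasurable (.of_forall fun g => ?_)
  rw [Complex.norm_real, Real.norm_eq_abs]
  exact abs_sin_div_self_le_one _

theorem mul_sin_mul_div_mul (X s : ℝ) : s * (sin (s * X) / (s * X)) = sin (s * X) / X := by
  rcases eq_or_ne s 0 with rfl | hs
  · simp
  · rw [mul_div, mul_div_mul_left _ _ hs]

theorem integral_Ioi_abs_smul_indicator_sin_div {X : ℝ} (hX : X ≠ 0) (R t : ℝ) :
    ∫ s in Ioi |t|, s • (Iic R).indicator (fun s => sin (s * X) / (s * X)) s =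
      (Icc (-R) R).indicator (fun t => (cos (t * X) - cos (R * X)) / X ^ 2) t := by
  simp_rw [smul_eq_mul, ← indicator_mul_right (Iic R) (fun s : ℝ => s), mul_sin_mul_div_mul]
  rw [setIntegral_indicator measurableSet_Iic, Ioi_inter_Iic]
  by_cases ht : |t| ≤ R
  · rw [indicator_of_mem (mem_Icc.2 (abs_le.1 ht)), ← intervalIntegral.integral_of_le ht,
      intervalIntegral.integral_div, intervalIntegral.integral_comp_mul_right _ hX, integral_sin]
    have hcos : cos (|t| * X) = cos (t * X) := by rcases abs_choice t with h | h <;> simp [h]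
    rw [hcos, smul_eq_mul]
    ring
  · rw [indicator_of_notMem (fun h => ht (abs_le.2 (mem_Icc.1 h))), Ioc_eq_empty (by linarith),
      Measure.restrict_empty, integral_zero_measure]

theorem integral_exp_I_mul_neg_to_self {c : ℝ} (hc : c ≠ 0) (R : ℝ) :
    ∫ t in -R..R, Complex.exp (Complex.I * (c * t)) = ((2 * sin (c * R) / c : ℝ) : ℂ) := by
  have hIc : Complex.I * c ≠ 0 := mul_ne_zero Complex.I_ne_zero (Complex.ofReal_ne_zero.2 hc)
  simp_rw [← mul_assoc]
  rw [integral_exp_mul_complex hIc]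
  push_cast
  rw [Complex.sin]
  field_simp
  ring_nf
  rw [Complex.I_sq]
  ring_nf

theorem exp_I_mul_mul_cos_sub (X Y C t : ℝ) :
    Complex.exp (Complex.I * (Y * t)) * ((cos (t * X) - C : ℝ) : ℂ) =
      (Complex.exp (Complex.I * ((Y + X : ℝ) * t)) +
        Complex.exp (Complex.I * ((Y - X : ℝ) * t))) / 2 -
        C * Complex.exp (Complex.I * (Y * t)) := by
  push_cast
  rw [Complex.cos, show Complex.I * ((Y + X) * t) = Complex.I * (Y * t) + t * X * Complex.I by ring,
    show Complex.I * ((Y - X) * t) = Complex.I * (Y * t) + -(t * X) * Complex.I by ring,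
    Complex.exp_add, Complex.exp_add]
  ring

theorem integral_exp_I_mul_mul_cos_sub_cos {R X Y : ℝ} (hY : Y ≠ 0) (hXY : X ≠ Y)
    (hq : X + Y ≠ 0) :
    ∫ t in -R..R, Complex.exp (Complex.I * (Y * t)) * ((cos (t * X) - cos (R * X) : ℝ) : ℂ) =
      ((X / ((X - Y) * (X + Y) * Y) *
        ((X + Y) * sin (R * (X - Y)) - (X - Y) * sin (R * (X + Y))) : ℝ) : ℂ) := by
  have hp : X - Y ≠ 0 := sub_ne_zero.2 hXY
  have hi : ∀ c : ℝ, IntervalIntegrable (fun t : ℝ => Complex.exp (Complex.I * (c * t))) volume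
      (-R) R := fun c => (by fun_prop : Continuous _).intervalIntegrable _ _
  simp_rw [exp_I_mul_mul_cos_sub]
  rw [intervalIntegral.integral_sub (((hi _).add (hi _)).div_const _) ((hi _).const_mul _),
    intervalIntegral.integral_div, intervalIntegral.integral_add (hi _) (hi _),
    intervalIntegral.integral_const_mul,
    integral_exp_I_mul_neg_to_self (by contrapose! hq; linarith),
    integral_exp_I_mul_neg_to_self (by contrapose! hp; linarith), integral_exp_I_mul_neg_to_self hY]
  norm_cast
  have hYX : Y - X ≠ 0 := by contrapose! hp; linarith
  have hYX' : Y + X ≠ 0 := by contrapose! hq; linarith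
  rw [show (Y - X) * R = -(R * (X - Y)) by ring, show (Y + X) * R = R * (X + Y) by ring,
    show R * (X - Y) = R * X - R * Y by ring, show R * (X + Y) = R * X + R * Y by ring,
    sin_neg, sin_add, sin_sub, mul_comm Y R]
  field_simp
  ring

theorem integral_exp_I_mul_indicator_cos_sub_cos {R X Y : ℝ} (hR : 0 ≤ R)
    (hY : Y ≠ 0) (hXY : X ≠ Y) (hq : X + Y ≠ 0) :
    ∫ t : ℝ, Complex.exp (Complex.I * (Y * t)) *
        (((Icc (-R) R).indicator (fun t => (cos (t * X) - cos (R * X)) / X ^ 2) t : ℝ) : ℂ) =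
      ((1 / ((X - Y) * (X + Y) * X * Y) *
        ((X + Y) * sin (R * (X - Y)) - (X - Y) * sin (R * (X + Y))) : ℝ) : ℂ) := by
  have hind : ∀ t : ℝ, Complex.exp (Complex.I * (Y * t)) *
      (((Icc (-R) R).indicator (fun t => (cos (t * X) - cos (R * X)) / X ^ 2) t : ℝ) : ℂ) =
      (Icc (-R) R).indicator (fun t => Complex.exp (Complex.I * (Y * t)) *
        ((cos (t * X) - cos (R * X) : ℝ) : ℂ) / (X : ℂ) ^ 2) t := by
    intro t
    by_cases ht : t ∈ Icc (-R) R
    · simp only [indicator_of_mem ht]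
      push_cast
      ring
    · simp [indicator_of_notMem ht]
  simp_rw [hind]
  rw [integral_indicator measurableSet_Icc, integral_Icc_eq_integral_Ioc,
    ← intervalIntegral.integral_of_le (neg_le_self hR), intervalIntegral.integral_div,
    integral_exp_I_mul_mul_cos_sub_cos hY hXY hq]
  push_cast
  field_simp

/-- the term `Ĝ₁` in Haack's closed form of the truncated convolution weighting
function: for `R > 0`, `X > 0`, and `a ∈ ℝ³` with `Y := ‖a‖ > 0`, `X ≠ Y`,
`∫_{‖g‖ ≤ R} e^{i⟨a,g⟩} sin(‖g‖X)/(‖g‖X) dg = (2π/(pqXY)) [q sin(Rp) − p sin(Rq)]`,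
where `p = X − Y` and `q = X + Y`. -/
theorem ball_sinc_fourier_transform (R X : ℝ) (hR : 0 < R) (hX : 0 < X)
    (a : V3) (ha : 0 < ‖a‖) (hXY : X ≠ ‖a‖) :
    (∫ g in closedBall (0 : V3) R,
        Complex.exp (Complex.I * ((⟪a, g⟫ : ℝ) : ℂ)) *
          ((Real.sin (‖g‖ * X) / (‖g‖ * X) : ℝ) : ℂ)) =
      ((2 * π / ((X - ‖a‖) * (X + ‖a‖) * X * ‖a‖) *
          ((X + ‖a‖) * Real.sin (R * (X - ‖a‖)) -
            (X - ‖a‖) * Real.sin (R * (X + ‖a‖))) : ℝ) : ℂ) := by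
  have hball : ∀ g : V3, (closedBall 0 R).indicator (fun g => Complex.exp (Complex.I * ⟪a, g⟫) *
      ((sin (‖g‖ * X) / (‖g‖ * X) : ℝ) : ℂ)) g = Complex.exp (Complex.I * ⟪a, g⟫) *
      (((Iic R).indicator (fun s => sin (s * X) / (s * X)) ‖g‖ : ℝ) : ℂ) := by
    intro g
    by_cases hg : ‖g‖ ≤ R <;> simp [hg, indicator]
  rw [← integral_indicator measurableSet_closedBall]
  simp_rw [hball]
  rw [integral_exp_inner_mul_comp_norm_of_finrank_eq_three finrank_euclideanSpace_fin
    (norm_pos_iff.1 ha)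
    (f := fun s => (((Iic R).indicator (fun s => sin (s * X) / (s * X)) s : ℝ) : ℂ))
    (integrable_indicator_sin_div_comp_norm R X)]
  have hradial : ∀ t : ℝ, ∫ s in Ioi |t|,
      s • (((Iic R).indicator (fun s => sin (s * X) / (s * X)) s : ℝ) : ℂ) =
      (((Icc (-R) R).indicator (fun t => (cos (t * X) - cos (R * X)) / X ^ 2) t : ℝ) : ℂ) := by
    intro t
    rw [← integral_Ioi_abs_smul_indicator_sin_div hX.ne', ← integral_complex_ofReal]
    simp_rw [Complex.real_smul, smul_eq_mul, Complex.ofReal_mul]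
  simp_rw [hradial]
  rw [integral_exp_I_mul_indicator_cos_sub_cos hR.le ha.ne' hXY (by positivity),
    Complex.real_smul]
  push_cast
  ring

end
end

section
/- Suppose f : ℝ³ → ℝ is measurable, nonnegative, and satisfies f(v) ≤ c·exp(−k|v|²) for all v ∈ ℝ³, where c, k > 0, and let B̃ > 0 and 0 ≤ λ ≤ 1. Then for every v ∈ ℝ³, the integrand of the Boltzmann collision operator is absolutely integrable: ∫_{g ∈ ℝ³} ∫_{Θ ∈ S²} | f(v + (g − |g|Θ)/2) f(v + (g + |g|Θ)/2) − f(v) f(v+g) | · B̃|g|^λ dΘ dg < ∞, so that Q(f,f)(v) is well defined. -/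
open MeasureTheory Real Metric Filter
open scoped RealInnerProductSpace

noncomputable section

/-!
The gain term `f(v′) f(w′)` and the loss term `f(v) f(v+g)` are both values of `f` at a pair of
velocities with midpoint `v + g/2` and half-separation of length `‖g‖/2`, so by the parallelogram
law the squared speeds of each pair add up to at least `‖g‖²/2`, and the Gaussian bound on `f` gives
`c² e^{-k‖g‖²/2}` for both. This decay absorbs the kernel `B̃‖g‖^λ ≤ B̃ e^{‖g‖}`, leaving the
integrand dominated by a multiple of `e^{-k‖g‖²/4}`, a function of `g` alone that is integrable
on `ℝ³`; the sphere has finite measure.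
-/

theorem rpow_le_exp_of_le_one {x p : ℝ} (hx : 0 ≤ x) (hp0 : 0 ≤ p) (hp1 : p ≤ 1) :
    x ^ p ≤ exp x := by
  rcases le_total x 1 with h | h
  · exact (rpow_le_one hx h hp0).trans (one_le_exp hx)
  · exact (rpow_le_self_of_one_le h hp1).trans ((le_add_of_nonneg_right zero_le_one).trans
      (add_one_le_exp x))

theorem exp_mul_exp_neg_mul_sq_le {k : ℝ} (hk : 0 < k) (x : ℝ) :
    exp x * exp (-k * (x ^ 2 / 2)) ≤ exp (1 / k) * exp (-(k / 4) * x ^ 2) := by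
  rw [← exp_add, ← exp_add, exp_le_exp]
  have hk' : k * (1 / k) = 1 := mul_one_div_cancel hk.ne'
  -- the difference of the two sides is `(k x - 2)² / (4k)`
  nlinarith [sq_nonneg (k * x - 2)]

theorem mul_le_of_le_exp_neg_mul_norm_sq {E : Type*} [Norm E] {f : E → ℝ} {c k r : ℝ}
    (hk : 0 ≤ k) (hf_nonneg : ∀ v, 0 ≤ f v) (hf_bound : ∀ v, f v ≤ c * exp (-k * ‖v‖ ^ 2))
    {a b : E} (hab : r ≤ ‖a‖ ^ 2 + ‖b‖ ^ 2) :
    f a * f b ≤ c ^ 2 * exp (-k * r) := by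
  have hc : 0 ≤ c * exp (-k * ‖a‖ ^ 2) := (hf_nonneg a).trans (hf_bound a)
  calc f a * f b ≤ (c * exp (-k * ‖a‖ ^ 2)) * (c * exp (-k * ‖b‖ ^ 2)) :=
        mul_le_mul (hf_bound a) (hf_bound b) (hf_nonneg b) hc
    _ = c ^ 2 * exp (-k * (‖a‖ ^ 2 + ‖b‖ ^ 2)) := by rw [mul_add, exp_add]; ring
    _ ≤ c ^ 2 * exp (-k * r) :=
        mul_le_mul_of_nonneg_left
          (exp_le_exp.2 (mul_le_mul_of_nonpos_left hab (neg_nonpos.mpr hk))) (sq_nonneg c)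

section InnerProductSpace

variable {E : Type*} [NormedAddCommGroup E] [InnerProductSpace ℝ E]

theorem sq_div_two_le_norm_sub_sq_add_norm_add_sq (m : E) {d : E} {r : ℝ} (hd : ‖d‖ = r / 2) :
    r ^ 2 / 2 ≤ ‖m - d‖ ^ 2 + ‖m + d‖ ^ 2 := by
  have h := parallelogram_law_with_norm ℝ m d
  rw [hd] at h
  nlinarith [sq_nonneg ‖m‖]

theorem norm_sq_div_two_le_norm_sq_add_norm_add_sq (v g : E) :
    ‖g‖ ^ 2 / 2 ≤ ‖v‖ ^ 2 + ‖v + g‖ ^ 2 := by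
  have hd : ‖(1 / 2 : ℝ) • g‖ = ‖g‖ / 2 := by rw [norm_smul]; norm_num; ring
  have hv : v + (1 / 2 : ℝ) • g - (1 / 2 : ℝ) • g = v := by module
  have hvg : v + (1 / 2 : ℝ) • g + (1 / 2 : ℝ) • g = v + g := by module
  simpa only [hv, hvg] using sq_div_two_le_norm_sub_sq_add_norm_add_sq (v + (1 / 2 : ℝ) • g) hd

theorem norm_sq_div_two_le_postcollisional {θ : E} (hθ : ‖θ‖ = 1) (v g : E) :
    ‖g‖ ^ 2 / 2 ≤
      ‖v + (1 / 2 : ℝ) • (g - ‖g‖ • θ)‖ ^ 2 + ‖v + (1 / 2 : ℝ) • (g + ‖g‖ • θ)‖ ^ 2 := by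
  have hd : ‖(1 / 2 : ℝ) • ‖g‖ • θ‖ = ‖g‖ / 2 := by
    rw [norm_smul, norm_smul, hθ]; norm_num; ring
  have h₁ : v + (1 / 2 : ℝ) • (g - ‖g‖ • θ) = v + (1 / 2 : ℝ) • g - (1 / 2 : ℝ) • ‖g‖ • θ := by
    module
  have h₂ : v + (1 / 2 : ℝ) • (g + ‖g‖ • θ) = v + (1 / 2 : ℝ) • g + (1 / 2 : ℝ) • ‖g‖ • θ := by
    module
  rw [h₁, h₂]
  exact sq_div_two_le_norm_sub_sq_add_norm_add_sq _ hd

theorem collision_integrand_le {c k B p : ℝ} (hk : 0 < k) (hB : 0 ≤ B) (hp0 : 0 ≤ p) (hp1 : p ≤ 1) {f : E → ℝ}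
    (hf_nonneg : ∀ v, 0 ≤ f v) (hf_bound : ∀ v, f v ≤ c * exp (-k * ‖v‖ ^ 2))
    {θ : E} (hθ : ‖θ‖ = 1) (v g : E) :
    |f (v + (1 / 2 : ℝ) • (g - ‖g‖ • θ)) * f (v + (1 / 2 : ℝ) • (g + ‖g‖ • θ)) - f v * f (v + g)| *
        (B * ‖g‖ ^ p) ≤ c ^ 2 * B * exp (1 / k) * exp (-(k / 4) * ‖g‖ ^ 2) := by
  have hdiff : |f (v + (1 / 2 : ℝ) • (g - ‖g‖ • θ)) * f (v + (1 / 2 : ℝ) • (g + ‖g‖ • θ)) -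
      f v * f (v + g)| ≤ c ^ 2 * exp (-k * (‖g‖ ^ 2 / 2)) :=
    abs_sub_le_of_nonneg_of_le (mul_nonneg (hf_nonneg _) (hf_nonneg _))
      (mul_le_of_le_exp_neg_mul_norm_sq hk.le hf_nonneg hf_bound
        (norm_sq_div_two_le_postcollisional hθ v g))
      (mul_nonneg (hf_nonneg _) (hf_nonneg _))
      (mul_le_of_le_exp_neg_mul_norm_sq hk.le hf_nonneg hf_bound
        (norm_sq_div_two_le_norm_sq_add_norm_add_sq v g))
  have hkernel : B * ‖g‖ ^ p ≤ B * exp ‖g‖ :=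
    mul_le_mul_of_nonneg_left (rpow_le_exp_of_le_one (norm_nonneg g) hp0 hp1) hB
  calc _ ≤ c ^ 2 * exp (-k * (‖g‖ ^ 2 / 2)) * (B * exp ‖g‖) :=
        mul_le_mul hdiff hkernel (by positivity) (by positivity)
    _ = c ^ 2 * B * (exp ‖g‖ * exp (-k * (‖g‖ ^ 2 / 2))) := by ring
    _ ≤ c ^ 2 * B * (exp (1 / k) * exp (-(k / 4) * ‖g‖ ^ 2)) :=
        mul_le_mul_of_nonneg_left (exp_mul_exp_neg_mul_sq_le hk ‖g‖) (by positivity)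
    _ = c ^ 2 * B * exp (1 / k) * exp (-(k / 4) * ‖g‖ ^ 2) := (mul_assoc _ _ _).symm

theorem integrable_exp_neg_mul_norm_sq [FiniteDimensional ℝ E] [MeasurableSpace E] [BorelSpace E] {a : ℝ} (ha : 0 < a) :
    Integrable (fun x : E => exp (-a * ‖x‖ ^ 2)) := by
  refine (GaussianFourier.integrable_cexp_neg_mul_sq_norm_add (V := E) (b := a)
    (by simpa using ha) 0 0).norm.congr (Eventually.of_forall fun x => ?_)
  simp [Complex.norm_exp, ← Complex.ofReal_pow]

end InnerProductSpace

theorem lintegral_lintegral_ofReal_lt_top_of_le {α β : Type*} [MeasurableSpace α]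
    [MeasurableSpace β] {μ : Measure α} {ν : Measure β} [IsFiniteMeasure ν] {F : α → β → ℝ}
    {G : α → ℝ} (hG : Integrable G μ) (hFG : ∀ a b, F a b ≤ G a) :
    ∫⁻ a, ∫⁻ b, ENNReal.ofReal (F a b) ∂ν ∂μ < ⊤ :=
  calc ∫⁻ a, ∫⁻ b, ENNReal.ofReal (F a b) ∂ν ∂μ
      ≤ ∫⁻ a, ∫⁻ _, ENNReal.ofReal (G a) ∂ν ∂μ :=
        lintegral_mono fun a => lintegral_mono fun b => ENNReal.ofReal_le_ofReal (hFG a b)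
    _ = (∫⁻ a, ENNReal.ofReal (G a) ∂μ) * ν Set.univ := by
        simp_rw [lintegral_const]; exact lintegral_mul_const' _ _ (measure_ne_top _ _)
    _ < ⊤ := ENNReal.mul_lt_top hG.lintegral_lt_top (measure_lt_top _ _)

instance isFiniteMeasure_sphereMeasure : IsFiniteMeasure sphereMeasure :=
  inferInstanceAs (IsFiniteMeasure (volume : Measure V3).toSphere)

theorem collision_integrand_integrable_general (c k Btil lam : ℝ) (hk : 0 < k)
    (hB : 0 < Btil) (hlam0 : 0 ≤ lam) (hlam1 : lam ≤ 1) (f : V3 → ℝ)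
    (hf_nonneg : ∀ v, 0 ≤ f v)
    (hf_bound : ∀ v : V3, f v ≤ c * Real.exp (-k * ‖v‖ ^ 2)) (v : V3) :
    (∫⁻ g : V3, ∫⁻ Θ : sphere (0 : V3) 1,
        ENNReal.ofReal
          (|f (v + (1 / 2 : ℝ) • (g - ‖g‖ • (Θ : V3))) *
                f (v + (1 / 2 : ℝ) • (g + ‖g‖ • (Θ : V3))) - f v * f (v + g)| *
            (Btil * ‖g‖ ^ lam)) ∂sphereMeasure) < ⊤ :=
  lintegral_lintegral_ofReal_lt_top_of_le
    ((integrable_exp_neg_mul_norm_sq (by positivity : 0 < k / 4)).const_mul _)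
    fun g Θ => collision_integrand_le hk hB.le hlam0 hlam1 hf_nonneg hf_bound
      (norm_eq_of_mem_sphere Θ) v g

/-- for `0 ≤ f ≤ c e^{−k|·|²}` measurable, `B̃ > 0`, `0 ≤ λ ≤ 1`, the integrand of
the Boltzmann collision operator is absolutely integrable at every `v`:
`∫_{g ∈ ℝ³} ∫_{Θ ∈ S²} |f(v′)f(w′) − f(v)f(v+g)| B̃‖g‖^λ dΘ dg < ∞`,
so that `Q(f,f)(v)` is well defined. -/
theorem collision_integrand_integrable (c k Btil lam : ℝ) (hc : 0 < c) (hk : 0 < k)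
    (hB : 0 < Btil) (hlam0 : 0 ≤ lam) (hlam1 : lam ≤ 1) (f : V3 → ℝ)
    (hf_meas : Measurable f) (hf_nonneg : ∀ v, 0 ≤ f v)
    (hf_bound : ∀ v : V3, f v ≤ c * Real.exp (-k * ‖v‖ ^ 2)) (v : V3) :
    (∫⁻ g : V3, ∫⁻ Θ : sphere (0 : V3) 1,
        ENNReal.ofReal
          (|f (v + (1 / 2 : ℝ) • (g - ‖g‖ • (Θ : V3))) *
                f (v + (1 / 2 : ℝ) • (g + ‖g‖ • (Θ : V3))) - f v * f (v + g)| *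
            (Btil * ‖g‖ ^ lam)) ∂sphereMeasure) < ⊤ :=
  collision_integrand_integrable_general c k Btil lam hk hB hlam0 hlam1 f hf_nonneg hf_bound v

end
end
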